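/- Every edge of G lies in exactly one of the 21 octahedral subgraphs [L]_j, so G is the edge-disjoint union of 21 induced copies of K_{2,2,2}. -/

import Mathlib

/-- Points of the Fano plane: we use `1,…,7` inside `Fin 8`. -/
abbrev FPt := Fin 8

/-- The seven lines of the Fano plane. -/
def fanoLines : Finset (Finset FPt) :=
  {{1,2,3},{1,4,5},{1,6,7},{2,4,6},{2,5,7},{3,4,7},{3,5,6}}

/-- The seven points of the Fano plane. -/
def fanoPoints : Finset FPt := {1,2,3,4,5,6,7}

/-- `(p, pairs)` is an ordered pencil if for each `i`, `insert p (pairs i)`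
is a Fano line, and the three (2-element) pairs are distinct. -/
def IsPencil (v : FPt × (Fin 3 → Finset FPt)) : Prop :=
  v.1 ∈ fanoPoints ∧
  (∀ i, (v.2 i).card = 2 ∧ v.1 ∉ v.2 i ∧ insert v.1 (v.2 i) ∈ fanoLines) ∧
  Function.Injective v.2

instance : DecidablePred IsPencil := fun v => by
  unfold IsPencil Function.Injective; infer_instance

/-- Ordered pencils of the Fano plane: the vertices of the graph `G`. -/
def Pencil := {v : FPt × (Fin 3 → Finset FPt) // IsPencil v}

instance : DecidableEq Pencil := by unfold Pencil; infer_instance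
instance : Fintype Pencil := by unfold Pencil; infer_instance

/-- Adjacency: different base points, and the pairs in each position meet
in exactly one point. -/
def pAdj (v w : Pencil) : Prop :=
  v.1.1 ≠ w.1.1 ∧ ∀ i, (v.1.2 i ∩ w.1.2 i).card = 1

instance : DecidableRel pAdj := fun v w => by unfold pAdj; infer_instance

/-- The graph `G` on the 42 ordered pencils of the Fano plane. -/
def G : SimpleGraph Pencil where
  Adj := pAdj
  symm := ⟨fun v w (h : pAdj v w) => ⟨h.1.symm, fun i => by rw [Finset.inter_comm]; exact h.2 i⟩⟩
  loopless := ⟨fun v (h : pAdj v v) => h.1 rfl⟩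

instance : DecidableRel G.Adj := fun v w => by
  change Decidable (pAdj v w); infer_instance

/-- The octahedron (copy of `K_{2,2,2}`) `[L]_j` associated to a Fano line `L`
and position `j`. -/
def octa (L : Finset FPt) (j : Fin 3) : Finset Pencil :=
  Finset.univ.filter (fun v => v.1.1 ∈ L ∧ v.1.2 j ⊆ L)


/-!
Write `v.line i` for the Fano line through the base point `p` of `v` and its `i`-th pair. These are
three distinct lines through `p`, hence all of them, so the base point `q` of a neighbour `w` lies
in some pair `v_i`. Then `v.line i` and `w.line i` both pass through `q` and through the common
point of `v_i` and `w_i`, so they coincide and `[v.line i]_i` contains the edge. Conversely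
`v ∈ [L]_j` forces `L = v.line j`, and `L` contains `p` and `q`, so `L = v.line i` and `j = i`.
-/

open Finset

set_option maxRecDepth 10000

theorem eq_of_mem_fanoLines {L L' : Finset FPt} (hL : L ∈ fanoLines) (hL' : L' ∈ fanoLines)
    {p q : FPt} (hpq : p ≠ q) (hp : p ∈ L) (hq : q ∈ L) (hp' : p ∈ L') (hq' : q ∈ L') :
    L = L' := by
  revert L L' p q
  decide

theorem card_of_mem_fanoLines {L : Finset FPt} (hL : L ∈ fanoLines) : #L = 3 := by
  revert L
  decide

theorem exists_mem_fanoLines_of_mem_fanoPoints {p q : FPt} (hp : p ∈ fanoPoints)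
    (hq : q ∈ fanoPoints) : ∃ L ∈ fanoLines, p ∈ L ∧ q ∈ L := by
  revert p q
  decide

theorem card_filter_mem_fanoLines {p : FPt} (hp : p ∈ fanoPoints) :
    #(fanoLines.filter (p ∈ ·)) = 3 := by
  revert p
  decide

namespace Pencil

def line (v : Pencil) (i : Fin 3) : Finset FPt := insert v.1.1 (v.1.2 i)

theorem base_mem_line (v : Pencil) (i : Fin 3) : v.1.1 ∈ v.line i := mem_insert_self _ _

theorem line_mem_fanoLines (v : Pencil) (i : Fin 3) : v.line i ∈ fanoLines := (v.2.2.1 i).2.2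

theorem line_injective (v : Pencil) : Function.Injective v.line := by
  intro i j h
  apply v.2.2.2
  simpa [line, erase_insert, (v.2.2.1 i).2.1, (v.2.2.1 j).2.1] using congrArg (erase · v.1.1) h

theorem image_line (v : Pencil) : univ.image v.line = fanoLines.filter (v.1.1 ∈ ·) := by
  refine eq_of_subset_of_card_le ?_ ?_
  · simp only [subset_iff, mem_image, mem_univ, true_and, mem_filter, forall_exists_index,
      forall_apply_eq_imp_iff]
    exact fun i => ⟨v.line_mem_fanoLines i, v.base_mem_line i⟩
  · rw [card_filter_mem_fanoLines v.2.1, card_image_of_injective _ v.line_injective]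
    rfl

theorem exists_mem_pair (v : Pencil) {q : FPt} (hq : q ∈ fanoPoints) (hqv : q ≠ v.1.1) :
    ∃ i, q ∈ v.1.2 i := by
  obtain ⟨L, hL, hpL, hqL⟩ := exists_mem_fanoLines_of_mem_fanoPoints v.2.1 hq
  have : L ∈ univ.image v.line := by rw [image_line]; exact mem_filter.2 ⟨hL, hpL⟩
  obtain ⟨i, -, rfl⟩ := mem_image.1 this
  exact ⟨i, (mem_insert.1 hqL).resolve_left hqv⟩

theorem mem_octa_iff {L : Finset FPt} (hL : L ∈ fanoLines) {v : Pencil} {j : Fin 3} :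
    v ∈ octa L j ↔ v.line j = L := by
  simp only [octa, mem_filter, mem_univ, true_and]
  constructor
  · rintro ⟨hp, hsub⟩
    refine eq_of_subset_of_card_le (insert_subset hp hsub) ?_
    rw [card_of_mem_fanoLines hL, line, card_insert_of_notMem (v.2.2.1 j).2.1, (v.2.2.1 j).1]
  · rintro rfl
    exact ⟨v.base_mem_line j, subset_insert _ _⟩

theorem line_eq_of_adj {v w : Pencil} (hvw : G.Adj v w) {i : Fin 3} (hw : w.1.1 ∈ v.1.2 i) :
    v.line i = w.line i := by
  obtain ⟨x, hx⟩ := card_eq_one.1 (hvw.2 i)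
  obtain ⟨hxv, hxw⟩ := mem_inter.1 (hx ▸ mem_singleton_self x)
  have hxq : x ≠ w.1.1 := fun h => (w.2.2.1 i).2.1 (h ▸ hxw)
  exact eq_of_mem_fanoLines (v.line_mem_fanoLines i) (w.line_mem_fanoLines i) hxq
    (mem_insert_of_mem hxv) (mem_insert_of_mem hw) (mem_insert_of_mem hxw) (w.base_mem_line i)

end Pencil

open Pencil

theorem edge_in_unique_octa :
    ∀ v w : Pencil, G.Adj v w →
      ∃! o : Finset FPt × Fin 3,
        o.1 ∈ fanoLines ∧ v ∈ octa o.1 o.2 ∧ w ∈ octa o.1 o.2 := by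
  intro v w hvw
  obtain ⟨i, hi⟩ := v.exists_mem_pair w.2.1 (Ne.symm hvw.1)
  have hL := v.line_mem_fanoLines i
  refine ⟨(v.line i, i),
    ⟨hL, (mem_octa_iff hL).2 rfl, (mem_octa_iff hL).2 (line_eq_of_adj hvw hi).symm⟩, ?_⟩
  rintro ⟨L, j⟩ ⟨hL', hv, hw⟩
  dsimp only at hL' hv hw
  rw [mem_octa_iff hL'] at hv hw
  have hiL : v.line i = L := eq_of_mem_fanoLines hL hL' hvw.1 (v.base_mem_line i)
    (mem_insert_of_mem hi) (hv ▸ v.base_mem_line j) (hw ▸ w.base_mem_line j)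
  rw [v.line_injective (hv.trans hiL.symm), hiL]
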